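/- Let a be an element of the ground model V and φ(x) a formula in the language of set theory. Then there is a condition p ∈ 𝕊 forcing φ(ǎ) if and only if every condition of 𝕊 forces φ(ǎ). -/

import Mathlib

open scoped Classical

/-! # Core framework: second-order logic over levels of Gödel's `L` -/

/-- The von Neumann natural numbers inside `ZFSet`. -/
noncomputable def natToZF : ℕ → ZFSet.{0}
  | 0 => ∅
  | n+1 => insert (natToZF n) (natToZF n)

/-- Formulas of second-order logic in the language of set theory (de Bruijn indices,
first-order variables and second-order (subset) variables). -/
inductive SOFormula : Type
  | memFF : ℕ → ℕ → SOFormula        -- xᵢ ∈ xⱼ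
  | eqFF  : ℕ → ℕ → SOFormula        -- xᵢ = xⱼ
  | memFS : ℕ → ℕ → SOFormula        -- xᵢ ∈ Xⱼ
  | not   : SOFormula → SOFormula
  | and   : SOFormula → SOFormula → SOFormula
  | allFO : SOFormula → SOFormula
  | exFO  : SOFormula → SOFormula
  | allSO : SOFormula → SOFormula
  | exSO  : SOFormula → SOFormula

/-- Prepend a value to a valuation (de Bruijn style). -/
def consF {α : Sort _} (a : α) (v : ℕ → α) : ℕ → α
  | 0 => a
  | n+1 => v n

/-- Satisfaction of a second-order formula in the structure `(A, ∈)`, where first-order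
quantifiers range over the elements of `A`, and second-order quantifiers range over those
subsets `S` of `A` satisfying the predicate `D` (taking `D := fun _ => True` gives full
second-order logic, i.e. quantification over the full powerset of `A`; other choices of `D`
give the relativization of satisfaction to an inner model or a generic extension). -/
def SOSatIn (D : Set ZFSet.{0} → Prop) (A : ZFSet.{0}) :
    SOFormula → (ℕ → ZFSet.{0}) → (ℕ → Set ZFSet.{0}) → Prop
  | .memFF i j, v, _ => v i ∈ v j
  | .eqFF i j, v, _ => v i = v j
  | .memFS i j, v, V => v i ∈ V j
  | .not φ, v, V => ¬ SOSatIn D A φ v V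
  | .and φ ψ, v, V => SOSatIn D A φ v V ∧ SOSatIn D A ψ v V
  | .allFO φ, v, V => ∀ a : ZFSet, a ∈ A → SOSatIn D A φ (consF a v) V
  | .exFO φ, v, V => ∃ a : ZFSet, a ∈ A ∧ SOSatIn D A φ (consF a v) V
  | .allSO φ, v, V => ∀ S : Set ZFSet, S ⊆ A.toSet → D S → SOSatIn D A φ v (consF S V)
  | .exSO φ, v, V => ∃ S : Set ZFSet, S ⊆ A.toSet ∧ D S ∧ SOSatIn D A φ v (consF S V)

/-- Full (unrelativized) second-order satisfaction over `(A, ∈)`. -/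
def SOSat (A : ZFSet.{0}) : SOFormula → (ℕ → ZFSet.{0}) → (ℕ → Set ZFSet.{0}) → Prop :=
  SOSatIn (fun _ => True) A

/-- A formula with no second-order quantifiers ("arithmetic" / second-order quantifier free). -/
def NoSOQuant : SOFormula → Prop
  | .memFF _ _ => True
  | .eqFF _ _ => True
  | .memFS _ _ => True
  | .not φ => NoSOQuant φ
  | .and φ ψ => NoSOQuant φ ∧ NoSOQuant ψ
  | .allFO φ => NoSOQuant φ
  | .exFO φ => NoSOQuant φ
  | .allSO _ => False
  | .exSO _ => False

mutual
  /-- `Σ¹ₙ` formulas: `n` alternating blocks of second-order quantifiers, starting with `∃`,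
  in front of a second-order quantifier free matrix. -/
  inductive IsSigmaSO : ℕ → SOFormula → Prop
    | arith {φ : SOFormula} (n : ℕ) : NoSOQuant φ → IsSigmaSO n φ
    | exq {n : ℕ} {φ : SOFormula} : IsPiSO n φ → IsSigmaSO (n+1) (SOFormula.exSO φ)
    | exq2 {n : ℕ} {φ : SOFormula} : IsSigmaSO (n+1) φ → IsSigmaSO (n+1) (SOFormula.exSO φ)
  /-- `Π¹ₙ` formulas. -/
  inductive IsPiSO : ℕ → SOFormula → Prop
    | arith {φ : SOFormula} (n : ℕ) : NoSOQuant φ → IsPiSO n φ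
    | allq {n : ℕ} {φ : SOFormula} : IsSigmaSO n φ → IsPiSO (n+1) (SOFormula.allSO φ)
    | allq2 {n : ℕ} {φ : SOFormula} : IsPiSO (n+1) φ → IsPiSO (n+1) (SOFormula.allSO φ)
end

/-- The two pointclasses `Σ` and `Π`. -/
inductive SOClass : Type
  | sigma : SOClass
  | pi : SOClass

/-- `Γ¹ₙ` formulas, for `Γ ∈ {Σ, Π}`. -/
def IsGammaSO : SOClass → ℕ → SOFormula → Prop
  | .sigma => IsSigmaSO
  | .pi => IsPiSO

/-- `x` is a subset of `A` which is definable over `(A, ∈)` by a first-order formula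
with parameters from `A`. -/
def DefinableSub (A x : ZFSet.{0}) : Prop :=
  ∃ (φ : SOFormula) (v : ℕ → ZFSet), NoSOQuant φ ∧ (∀ n, v n ∈ A) ∧
    ∀ y, y ∈ x ↔ y ∈ A ∧ SOSat A φ (consF y v) (fun _ => ∅)

/-- The definable powerset operation. -/
noncomputable def defPow (A : ZFSet.{0}) : ZFSet.{0} :=
  ZFSet.sep (fun x => DefinableSub A x) (ZFSet.powerset A)

/-- The `o`-th level `L_o` of Gödel's constructible hierarchy. -/
noncomputable def LSet (o : Ordinal.{0}) : ZFSet.{0} :=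
  Ordinal.limitRecOn o ∅ (fun _ ih => defPow ih)
    (fun o' _ ih => ZFSet.sUnion (ZFSet.range (fun i : o'.ToType =>
      ih (Ordinal.ToType.mk.symm i).1 (Ordinal.ToType.mk.symm i).2)))

/-- A set is constructible if it belongs to some level of the `L`-hierarchy. -/
def Constructible (x : ZFSet.{0}) : Prop := ∃ o : Ordinal.{0}, x ∈ LSet o

/-- The collection of subsets of the universe that exist in `L`
(used to relativize second-order quantifiers to `L`). -/
def ConstructibleD : Set ZFSet.{0} → Prop :=
  fun S => ∃ z : ZFSet, Constructible z ∧ S = z.toSet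

/-- The von Neumann ordinal corresponding to an `Ordinal`. -/
noncomputable def ordToZF (o : Ordinal.{0}) : ZFSet.{0} :=
  ZFSet.range (fun i : o.ToType =>
    have : (Ordinal.ToType.mk.symm i).1 < o := (Ordinal.ToType.mk.symm i).2
    ordToZF (Ordinal.ToType.mk.symm i).1)
  termination_by o
  decreasing_by exact this

/-- The valuation assigning the (von Neumann codes of the) ordinal parameters
`β 0, …, β (l-1)` to the first `l` first-order variables. -/
noncomputable def paramVal (l : ℕ) (β : ℕ → Ordinal.{0}) : ℕ → ZFSet.{0} :=
  fun i => if i < l then ordToZF (β i) else ∅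

/-- `α` is `Γ¹ₙ`-reflecting, with second-order quantifiers relativized to `D`:
for every tuple `β 0 < … < β (l-1) < α` and every `Γ¹ₙ` formula `φ`, if `L_α ⊨ φ(β⃗)`
then there is `α'` with `β (l-1) < α' < α` and `L_{α'} ⊨ φ(β⃗)`. -/
def ReflectingIn (D : Set ZFSet.{0} → Prop) (Γ : SOClass) (n : ℕ) (α : Ordinal.{0}) : Prop :=
  ∀ (l : ℕ) (β : ℕ → Ordinal.{0}),
    (∀ i j, i < j → j < l → β i < β j) → (∀ i, i < l → β i < α) →
    ∀ φ : SOFormula, IsGammaSO Γ n φ →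
      SOSatIn D (LSet α) φ (paramVal l β) (fun _ => ∅) →
      ∃ α' : Ordinal, (∀ i, i < l → β i < α') ∧ α' < α ∧
        SOSatIn D (LSet α') φ (paramVal l β) (fun _ => ∅)

/-- `α` is `Γ¹ₙ`-reflecting (full second-order logic, i.e. computed in `V`). -/
def Reflecting : SOClass → ℕ → Ordinal.{0} → Prop := ReflectingIn (fun _ => True)

/-- The least `Γ¹ₙ`-reflecting ordinal, relativized to `D`. -/
noncomputable def leastReflecting (D : Set ZFSet.{0} → Prop) (Γ : SOClass) (n : ℕ) :
    Ordinal.{0} :=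
  sInf {α | ReflectingIn D Γ n α}

/-- `σ¹ₙ`, the least `Σ¹ₙ`-reflecting ordinal. -/
noncomputable def sigma1 (n : ℕ) : Ordinal.{0} := leastReflecting (fun _ => True) .sigma n

/-- `π¹ₙ`, the least `Π¹ₙ`-reflecting ordinal. -/
noncomputable def pi1 (n : ℕ) : Ordinal.{0} := leastReflecting (fun _ => True) .pi n

/-- `(σ¹ₙ)^L`. -/
noncomputable def sigma1L (n : ℕ) : Ordinal.{0} := leastReflecting ConstructibleD .sigma n

/-- `(π¹ₙ)^L`. -/
noncomputable def pi1L (n : ℕ) : Ordinal.{0} := leastReflecting ConstructibleD .pi n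

/-- The first uncountable ordinal `ω₁` (of `V`). -/
noncomputable def omega1V : Ordinal.{0} := (Cardinal.aleph 1).ord
/-! # The concrete forcing notions -/

/-- Cohen forcing `ℂ_X`: finite partial functions `X × ω → 2`, coded as finite functional
sets of pairs, ordered by reverse inclusion. -/
def CohenCond (X : Type) : Type :=
  {s : Finset ((X × ℕ) × Bool) // ∀ a b b', (a, b) ∈ s → (a, b') ∈ s → b = b'}

instance CohenCond.preorder (X : Type) : Preorder (CohenCond X) where
  le p q := q.1 ⊆ p.1
  le_refl p := Finset.Subset.refl _
  le_trans p q r h h' := Finset.Subset.trans h' h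

/-- The maximal condition (empty function) of Cohen forcing. -/
def CohenTop (X : Type) : CohenCond X :=
  ⟨∅, by intro a b b' h; simp at h⟩

/-- `p` is a perfect subtree of `2^{<ω}`. -/
def SacksTree (p : Set (List Bool)) : Prop :=
  p.Nonempty ∧ (∀ s t : List Bool, s <+: t → t ∈ p → s ∈ p) ∧
    ∀ t ∈ p, ∃ t' ∈ p, t <+: t' ∧ t' ++ [false] ∈ p ∧ t' ++ [true] ∈ p

/-- Sacks forcing: perfect subtrees of `2^{<ω}` ordered by inclusion. -/
def Sacks : Type := {p : Set (List Bool) // SacksTree p}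

instance Sacks.preorder : Preorder Sacks where
  le p q := p.1 ⊆ q.1
  le_refl p := subset_rfl
  le_trans p q r h h' := Set.Subset.trans h h'

/-- The maximal condition of Sacks forcing: the full binary tree. -/
def SacksTop : Sacks :=
  ⟨Set.univ, ⟨⟨[], trivial⟩, fun _ _ _ _ => trivial,
    fun t _ => ⟨t, trivial, List.prefix_refl t, trivial, trivial⟩⟩⟩

/-- `T` is a Laver tree: a subtree of `ω^{<ω}` with a stem below which every node splits
infinitely. -/
def LaverTree (T : Set (List ℕ)) : Prop :=
  T.Nonempty ∧ (∀ s t : List ℕ, s <+: t → t ∈ T → s ∈ T) ∧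
    ∃ s ∈ T, (∀ t ∈ T, t <+: s ∨ s <+: t) ∧
      ∀ t ∈ T, s <+: t → {n : ℕ | t ++ [n] ∈ T}.Infinite

/-- Laver forcing. -/
def Laver : Type := {T : Set (List ℕ) // LaverTree T}

instance Laver.preorder : Preorder Laver where
  le p q := p.1 ⊆ q.1
  le_refl p := subset_rfl
  le_trans p q r h h' := Set.Subset.trans h h'

/-- `T` is a superperfect (Miller) tree: a subtree of `ω^{<ω}` in which every node extends
to an infinitely splitting node. -/
def MillerTree (T : Set (List ℕ)) : Prop :=
  T.Nonempty ∧ (∀ s t : List ℕ, s <+: t → t ∈ T → s ∈ T) ∧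
    ∀ t ∈ T, ∃ t' ∈ T, t <+: t' ∧ {n : ℕ | t' ++ [n] ∈ T}.Infinite

/-- Miller forcing. -/
def Miller : Type := {T : Set (List ℕ) // MillerTree T}

instance Miller.preorder : Preorder Miller where
  le p q := p.1 ⊆ q.1
  le_refl p := subset_rfl
  le_trans p q r h h' := Set.Subset.trans h h'

/-- A constructible real: a constructible subset of `ω`. -/
def LReal : Type 1 := {x : ZFSet.{0} // x ⊆ ZFSet.omega ∧ Constructible x}

/-- The collapse forcing `ℙ = ℙ^L`: finite sequences of (constructible) reals ordered by
end extension. -/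
def CollapseP : Type 1 := List LReal

instance CollapseP.preorder : Preorder CollapseP where
  le p q := q <+: p
  le_refl p := List.prefix_refl p
  le_trans p q r h h' := List.IsPrefix.trans h' h
/-! # Names for arbitrary sets and the full forcing relation -/

/-- `P`-names for arbitrary sets of the generic extension: a name is a family of names
together with, for each of them, a set of conditions putting it into the named set. -/
inductive SName (P : Type) : Type 1
  | mk (α : Type) (f : α → SName P) (g : α → Set P) : SName P

/-- The rank of a name. -/
noncomputable def SName.rank {P : Type} : SName P → Ordinal.{0}
  | .mk _ f _ => Ordinal.lsub fun a => (f a).rank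

theorem SName.rank_lt {P : Type} (α : Type) (f : α → SName P) (g : α → Set P) (a : α) :
    (f a).rank < (SName.mk α f g).rank := by
  simpa [SName.rank] using Ordinal.lt_lsub (fun a => (f a).rank) a

theorem lex_maxMin_lt {x a c : Ordinal.{0}} (h : x < a) :
    toLex (max x c, min x c) < toLex (max a c, min a c) := by
  rw [Prod.Lex.toLex_lt_toLex]
  rcases le_total x c with h1 | h1 <;> rcases le_total a c with h2 | h2
  · right; simp [max_eq_right h1, max_eq_right h2, min_eq_left h1, min_eq_left h2, h]
  · rcases lt_or_eq_of_le h2 with h3 | h3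
    · left; simp only [max_eq_right h1, max_eq_left h2]; exact h3
    · subst h3; right; simp [min_eq_left h1, h, h1]
  · exact absurd (h2.trans h1) (not_le.2 h)
  · left; simp only [max_eq_left h1, max_eq_left h2]; exact h

/-- The definable forcing relation for atomic formulas: `FME true σ τ p` means
`p ⊩ σ = τ`, and `FME false σ τ p` means `p ⊩ σ ∈ τ`, with the standard recursive
clauses. -/
noncomputable def FME {P : Type} [Preorder P] : Bool → SName P → SName P → P → Prop
  | true, .mk α f g, .mk β h k, p =>
      (∀ a : α, ∀ q ≤ p, q ∈ g a → FME false (f a) (.mk β h k) q) ∧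
      (∀ b : β, ∀ q ≤ p, q ∈ k b → FME false (h b) (.mk α f g) q)
  | false, σ, .mk β h k, p =>
      ∀ q ≤ p, ∃ r ≤ q, ∃ b : β, r ∈ k b ∧ FME true σ (h b) r
  termination_by b σ τ _ => toLex (max σ.rank τ.rank, min σ.rank τ.rank)
  decreasing_by
  · exact lex_maxMin_lt (SName.rank_lt α f g a)
  · have := lex_maxMin_lt (c := (SName.mk α f g).rank) (SName.rank_lt β h k b)
    rwa [max_comm (SName.mk β h k).rank, min_comm (SName.mk β h k).rank] at this
  · have := lex_maxMin_lt (c := σ.rank) (SName.rank_lt β h k b)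
    rwa [max_comm (h b).rank, min_comm (h b).rank, max_comm (SName.mk β h k).rank,
      min_comm (SName.mk β h k).rank] at this

/-- The forcing relation `p ⊩ φ(v⃗)` for (first-order) formulas in the language of set
theory, with first-order quantifiers ranging over all names (i.e. over the whole generic
extension). -/
def ForcesSet {P : Type} [Preorder P] : P → SOFormula → (ℕ → SName P) → Prop
  | p, .memFF i j, v => FME false (v i) (v j) p
  | p, .eqFF i j, v => FME true (v i) (v j) p
  | _, .memFS _ _, _ => False
  | p, .not φ, v => ∀ q ≤ p, ¬ ForcesSet q φ v
  | p, .and φ ψ, v => ForcesSet p φ v ∧ ForcesSet p ψ v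
  | p, .allFO φ, v => ∀ σ : SName P, ForcesSet p φ (consF σ v)
  | p, .exFO φ, v => ∀ q ≤ p, ∃ r ≤ q, ∃ σ : SName P, ForcesSet r φ (consF σ v)
  | _, .allSO _, _ => False
  | _, .exSO _, _ => False

/-- The check name `x̌` of a hereditarily given set. -/
noncomputable def PSet.toSName (P : Type) : PSet.{0} → SName P
  | .mk α A => .mk α (fun a => PSet.toSName P (A a)) (fun _ => Set.univ)

/-- The check name `x̌` of a ground model set `x`. -/
noncomputable def checkSName (P : Type) (x : ZFSet.{0}) : SName P :=
  PSet.toSName P (Quotient.out x)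

/-! Sacks forcing is homogeneous. Sending the node `s` of a perfect tree to the `s`-th splitting
node of a condition `p` (follow the bits of `s` from splitting node to splitting node) maps `𝕊`
order-isomorphically onto the cone below `p`, and the full tree onto `p`. Pulling names back along
an order embedding whose range is downward closed preserves the forcing relation, and it fixes
check names; so `p` forces `φ(ǎ)` exactly when the full tree does. -/

namespace List

variable {α : Type*}

theorem exists_concat_prefix_of_prefix_of_ne {t s : List α} (h : t <+: s) (hne : t ≠ s) :
    ∃ b, t ++ [b] <+: s := by
  obtain ⟨_ | ⟨b, u⟩, rfl⟩ := h
  · exact absurd (append_nil t).symm hne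
  · exact ⟨b, u, by simp⟩

theorem eq_of_concat_prefix_of_concat_prefix {v z : List α} {a b : α} (ha : v ++ [a] <+: z)
    (hb : v ++ [b] <+: z) : a = b := by
  have h := (prefix_or_prefix_of_prefix ha hb).elim (·.eq_of_length (by simp))
    (·.eq_of_length (by simp) |>.symm)
  simpa using h

theorem prefix_or_prefix_or_fork (x y : List α) :
    x <+: y ∨ y <+: x ∨ ∃ v a b, a ≠ b ∧ v ++ [a] <+: x ∧ v ++ [b] <+: y := by
  induction x generalizing y with
  | nil => exact Or.inl nil_prefix
  | cons c x ih =>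
    rcases y with _ | ⟨d, y⟩
    · exact Or.inr (Or.inl nil_prefix)
    by_cases hcd : c = d
    · subst hcd
      rcases ih y with h | h | ⟨v, a, b, hab, ha, hb⟩
      · exact Or.inl (cons_prefix_cons.mpr ⟨rfl, h⟩)
      · exact Or.inr (Or.inl (cons_prefix_cons.mpr ⟨rfl, h⟩))
      · exact Or.inr (Or.inr ⟨c :: v, a, b, hab, cons_prefix_cons.mpr ⟨rfl, ha⟩,
          cons_prefix_cons.mpr ⟨rfl, hb⟩⟩)
    · exact Or.inr (Or.inr ⟨[], c, d, hcd, by simp, by simp⟩)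

theorem prefix_or_prefix_or_fork_above {t x y : List α} (hx : t <+: x) (hy : t <+: y) :
    x <+: y ∨ y <+: x ∨ ∃ v a b, t <+: v ∧ a ≠ b ∧ v ++ [a] <+: x ∧ v ++ [b] <+: y := by
  rcases prefix_or_prefix_or_fork x y with h | h | ⟨v, a, b, hab, ha, hb⟩
  · exact Or.inl h
  · exact Or.inr (Or.inl h)
  refine Or.inr (Or.inr ⟨v, a, b, ?_, hab, ha, hb⟩)
  have hvt : ¬ v ++ [a] <+: t := fun h => hab (eq_of_concat_prefix_of_concat_prefix (h.trans hy) hb)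
  rcases prefix_or_prefix_of_prefix hx ha with h | h
  · rcases prefix_concat_iff.mp h with rfl | h
    · exact absurd prefix_rfl hvt
    · exact h
  · exact absurd h hvt

end List

theorem comp_consF {α β : Sort _} (g : α → β) (a : α) (v : ℕ → α) :
    (fun n => g (consF a v n)) = consF (g a) (fun n => g (v n)) := by
  funext n
  cases n <;> rfl

namespace SName

variable {P Q : Type}

def comap (f : P → Q) : SName Q → SName P
  | .mk α F G => .mk α (fun a => (F a).comap f) (fun a => f ⁻¹' G a)

def map (f : P → Q) : SName P → SName Q
  | .mk α F G => .mk α (fun a => (F a).map f) (fun a => f '' G a)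

theorem comap_map {f : P → Q} (hf : Function.Injective f) (σ : SName P) :
    (σ.map f).comap f = σ := by
  induction σ with
  | mk α F G ih => simp only [map, comap, ih, hf.preimage_image]

theorem comap_surjective {f : P → Q} (hf : Function.Injective f) :
    Function.Surjective (comap f) :=
  fun σ => ⟨σ.map f, comap_map hf σ⟩

end SName

theorem PSet.comap_toSName {P Q : Type} (f : P → Q) (x : PSet.{0}) :
    (x.toSName Q).comap f = x.toSName P := by
  induction x with
  | mk α A ih => simp only [PSet.toSName, SName.comap, ih, Set.preimage_univ]

theorem checkSName_comap {P Q : Type} (f : P → Q) (x : ZFSet.{0}) :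
    (checkSName Q x).comap f = checkSName P x :=
  PSet.comap_toSName f _

namespace OrderEmbedding

variable {P Q : Type*} [Preorder P] [Preorder Q] {f : P ↪o Q}

theorem forall_le_apply_iff (hf : IsLowerSet (Set.range f)) {q : P} {p : Q → Prop} :
    (∀ r ≤ f q, p r) ↔ ∀ r ≤ q, p (f r) := by
  refine ⟨fun h r hr => h (f r) (f.le_iff_le.mpr hr), fun h r hr => ?_⟩
  obtain ⟨r, rfl⟩ := hf hr (Set.mem_range_self q)
  exact h r (f.le_iff_le.mp hr)

theorem exists_le_apply_iff (hf : IsLowerSet (Set.range f)) {q : P} {p : Q → Prop} :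
    (∃ r ≤ f q, p r) ↔ ∃ r ≤ q, p (f r) := by
  refine ⟨fun ⟨r, hr, h⟩ => ?_, fun ⟨r, hr, h⟩ => ⟨f r, f.le_iff_le.mpr hr, h⟩⟩
  obtain ⟨r, rfl⟩ := hf hr (Set.mem_range_self q)
  exact ⟨r, f.le_iff_le.mp hr, h⟩

end OrderEmbedding

section Transfer

open OrderEmbedding

variable {P Q : Type} [Preorder P] [Preorder Q] {f : P ↪o Q}

theorem fme_comap_iff (hf : IsLowerSet (Set.range f)) (b : Bool) (σ τ : SName Q) (q : P) :
    FME b (σ.comap f) (τ.comap f) q ↔ FME b σ τ (f q) := by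
  match b, σ, τ with
  | true, .mk α F G, .mk β H K =>
    rw [SName.comap, SName.comap, FME, FME, forall_congr' fun _ => forall_le_apply_iff hf,
      forall_congr' fun _ => forall_le_apply_iff hf]
    exact and_congr
      (forall_congr' fun a => forall₂_congr fun r _ => imp_congr_right fun _ =>
        fme_comap_iff hf false (F a) (.mk β H K) r)
      (forall_congr' fun b => forall₂_congr fun r _ => imp_congr_right fun _ =>
        fme_comap_iff hf false (H b) (.mk α F G) r)
  | false, σ, .mk β H K =>
    rw [SName.comap, FME, FME, forall_le_apply_iff hf]
    refine forall₂_congr fun r _ => ?_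
    rw [exists_le_apply_iff hf]
    exact exists_congr fun s => and_congr_right fun _ => exists_congr fun b =>
      and_congr_right fun _ => fme_comap_iff hf true σ (H b) s
  termination_by toLex (max σ.rank τ.rank, min σ.rank τ.rank)
  decreasing_by
  · exact lex_maxMin_lt (SName.rank_lt α F G a)
  · simpa only [max_comm, min_comm] using
      lex_maxMin_lt (c := (SName.mk α F G).rank) (SName.rank_lt β H K b)
  · simpa only [max_comm, min_comm] using lex_maxMin_lt (c := σ.rank) (SName.rank_lt β H K b)

/-- Every `P`-name is a pullback, which handles the quantifier clauses. -/
theorem forcesSet_comap_iff (hf : IsLowerSet (Set.range f)) (φ : SOFormula)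
    (v : ℕ → SName Q) (q : P) :
    ForcesSet q φ (fun n => (v n).comap f) ↔ ForcesSet (f q) φ v := by
  have hsurj := SName.comap_surjective f.injective
  induction φ generalizing v q with
  | memFF i j => exact fme_comap_iff hf false (v i) (v j) q
  | eqFF i j => exact fme_comap_iff hf true (v i) (v j) q
  | memFS | allSO | exSO => exact Iff.rfl
  | not φ ih =>
    rw [ForcesSet, ForcesSet, forall_le_apply_iff hf]
    exact forall₂_congr fun r _ => not_congr (ih v r)
  | and φ ψ ihφ ihψ => exact and_congr (ihφ v q) (ihψ v q)
  | allFO φ ih =>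
    rw [ForcesSet, ForcesSet, hsurj.forall]
    exact forall_congr' fun σ => by rw [← comp_consF]; exact ih _ q
  | exFO φ ih =>
    rw [ForcesSet, ForcesSet, forall_le_apply_iff hf]
    refine forall₂_congr fun r _ => ?_
    rw [exists_le_apply_iff hf]
    refine exists_congr fun s => and_congr_right fun _ => ?_
    rw [hsurj.exists]
    exact exists_congr fun σ => by rw [← comp_consF]; exact ih _ s

theorem forcesSet_checkSName_iff (hf : IsLowerSet (Set.range f)) (φ : SOFormula)
    (x : ℕ → ZFSet.{0}) (q : P) :
    ForcesSet (f q) φ (fun n => checkSName Q (x n)) ↔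
      ForcesSet q φ (fun n => checkSName P (x n)) := by
  simpa only [checkSName_comap] using
    (forcesSet_comap_iff hf φ (fun n => checkSName Q (x n)) q).symm

end Transfer

namespace Sacks

theorem mem_of_prefix (p : Sacks) {s t : List Bool} (h : s <+: t) (ht : t ∈ p.1) : s ∈ p.1 :=
  p.2.2.1 s t h ht

theorem nil_mem (p : Sacks) : [] ∈ p.1 :=
  p.2.1.elim fun _ ht => p.mem_of_prefix List.nil_prefix ht

def Splits (p : Sacks) (t : List Bool) : Prop :=
  ∀ b, t ++ [b] ∈ p.1

variable {p r : Sacks} {s t u : List Bool}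

theorem Splits.mem (h : p.Splits t) : t ∈ p.1 :=
  p.mem_of_prefix (List.prefix_append t [false]) (h false)

theorem Splits.of_le (hr : r ≤ p) (h : r.Splits t) : p.Splits t :=
  fun b => hr (h b)

theorem splits_of_ne {a b : Bool} (hab : a ≠ b) (ha : t ++ [a] ∈ p.1) (hb : t ++ [b] ∈ p.1) :
    p.Splits t := by
  intro c
  cases a <;> cases b <;> cases c <;> simp_all

theorem exists_prefix_splits (ht : t ∈ p.1) : ∃ u, t <+: u ∧ p.Splits u := by
  obtain ⟨u, -, htu, h0, h1⟩ := p.2.2.2 t ht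
  exact ⟨u, htu, Bool.forall_bool.mpr ⟨h0, h1⟩⟩

/-- The junk value `t` is returned when `t ∉ p`. -/
noncomputable def firstSplit (p : Sacks) (t : List Bool) : List Bool :=
  if h : ∃ u, t <+: u ∧ p.Splits u then
    Function.argminOn List.length {u | t <+: u ∧ p.Splits u} h
  else t

theorem prefix_firstSplit (ht : t ∈ p.1) : t <+: p.firstSplit t ∧ p.Splits (p.firstSplit t) := by
  rw [firstSplit, dif_pos (exists_prefix_splits ht)]
  exact Function.argminOn_mem List.length {u | t <+: u ∧ p.Splits u} _

theorem length_firstSplit_le (htu : t <+: u) (hu : p.Splits u) :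
    (p.firstSplit t).length ≤ u.length := by
  rw [firstSplit, dif_pos ⟨u, htu, hu⟩]
  exact Function.argminOn_le List.length _ (show u ∈ {u | t <+: u ∧ p.Splits u} from ⟨htu, hu⟩)

theorem firstSplit_prefix (htu : t <+: u) (hu : p.Splits u) : p.firstSplit t <+: u := by
  obtain ⟨htf, hf⟩ := prefix_firstSplit (p.mem_of_prefix htu hu.mem)
  rcases List.prefix_or_prefix_or_fork_above htf htu with h | h | ⟨v, a, b, htv, hab, ha, hb⟩
  · exact h
  · rw [h.eq_of_length (le_antisymm h.length_le (length_firstSplit_le htu hu))]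
  · have hv : p.Splits v := splits_of_ne hab (p.mem_of_prefix ha hf.mem) (p.mem_of_prefix hb hu.mem)
    have hlt := ha.length_le
    have hle := length_firstSplit_le htv hv
    simp only [List.length_append, List.length_singleton] at hlt
    omega

theorem firstSplit_eq_self (hu : p.Splits u) : p.firstSplit u = u :=
  antisymm (firstSplit_prefix List.prefix_rfl hu) (prefix_firstSplit hu.mem).1

theorem firstSplit_mem_of_le (hr : r ≤ p) (ht : t ∈ r.1) : p.firstSplit t ∈ r.1 := by
  obtain ⟨u, htu, hu⟩ := exists_prefix_splits ht
  exact r.mem_of_prefix (firstSplit_prefix htu (hu.of_le hr)) hu.mem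

theorem firstSplit_concat_of_not_splits {c : Bool} (ht : t ++ [c] ∈ p.1) (hns : ¬ p.Splits t) :
    p.firstSplit (t ++ [c]) = p.firstSplit t := by
  obtain ⟨htf, hf⟩ := prefix_firstSplit (p.mem_of_prefix (List.prefix_append t [c]) ht)
  have hne : t ≠ p.firstSplit t := fun h => hns (h ▸ hf)
  obtain ⟨c', hc'⟩ := List.exists_concat_prefix_of_prefix_of_ne htf hne
  have hcc' : c = c' := by
    by_contra hcc'
    exact hns (splits_of_ne hcc' ht (p.mem_of_prefix hc' hf.mem))
  subst hcc'
  refine antisymm (firstSplit_prefix hc' hf) (firstSplit_prefix ?_ (prefix_firstSplit ht).2)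
  exact (List.prefix_append t [c]).trans (prefix_firstSplit ht).1

noncomputable def splitNode (p : Sacks) (s : List Bool) : List Bool :=
  s.foldl (fun u b => p.firstSplit (u ++ [b])) (p.firstSplit [])

theorem splitNode_concat (s : List Bool) (b : Bool) :
    p.splitNode (s ++ [b]) = p.firstSplit (p.splitNode s ++ [b]) := by
  simp [splitNode, List.foldl_append]

theorem splits_splitNode (s : List Bool) : p.Splits (p.splitNode s) := by
  induction s using List.reverseRecOn with
  | nil => exact (prefix_firstSplit p.nil_mem).2
  | append_singleton s b ih =>
    rw [splitNode_concat]
    exact (prefix_firstSplit (ih b)).2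

theorem splitNode_mem (s : List Bool) : p.splitNode s ∈ p.1 :=
  (splits_splitNode s).mem

theorem concat_prefix_splitNode_concat (s : List Bool) (b : Bool) :
    p.splitNode s ++ [b] <+: p.splitNode (s ++ [b]) := by
  rw [splitNode_concat]
  exact (prefix_firstSplit (splits_splitNode s b)).1

theorem splitNode_prefix_splitNode (h : s <+: t) : p.splitNode s <+: p.splitNode t := by
  obtain ⟨u, rfl⟩ := h
  induction u using List.reverseRecOn with
  | nil => simp
  | append_singleton u b ih =>
    rw [← List.append_assoc]
    exact ih.trans ((List.prefix_append _ [b]).trans (concat_prefix_splitNode_concat _ b))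

theorem splitNode_prefix_splitNode_iff : p.splitNode s <+: p.splitNode t ↔ s <+: t := by
  refine ⟨fun h => ?_, splitNode_prefix_splitNode⟩
  rcases List.prefix_or_prefix_or_fork s t with hst | hts | ⟨v, a, b, hab, ha, hb⟩
  · exact hst
  · by_cases heq : t = s
    · exact heq ▸ List.prefix_rfl
    obtain ⟨c, hc⟩ := List.exists_concat_prefix_of_prefix_of_ne hts heq
    have hlen := ((concat_prefix_splitNode_concat t c).trans
      ((splitNode_prefix_splitNode hc).trans h)).length_le
    simp at hlen
  · exact absurd (List.eq_of_concat_prefix_of_concat_prefix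
      (((concat_prefix_splitNode_concat v a).trans (splitNode_prefix_splitNode ha)).trans h)
      ((concat_prefix_splitNode_concat v b).trans (splitNode_prefix_splitNode hb))) hab

theorem exists_splitNode_eq_firstSplit (ht : t ∈ p.1) : ∃ s, p.splitNode s = p.firstSplit t := by
  induction t using List.reverseRecOn with
  | nil => exact ⟨[], rfl⟩
  | append_singleton t c ih =>
    obtain ⟨s, hs⟩ := ih (p.mem_of_prefix (List.prefix_append t [c]) ht)
    by_cases hsplit : p.Splits t
    · rw [firstSplit_eq_self hsplit] at hs
      exact ⟨s ++ [c], by rw [splitNode_concat, hs]⟩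
    · exact ⟨s, by rw [hs, firstSplit_concat_of_not_splits ht hsplit]⟩

theorem le_antisymm {p q : Sacks} (hpq : p ≤ q) (hqp : q ≤ p) : p = q :=
  Subtype.ext (Set.Subset.antisymm hpq hqp)

noncomputable def copyInto (p r : Sacks) : Sacks :=
  ⟨{u | ∃ s ∈ r.1, u <+: p.splitNode s}, by
    refine ⟨⟨[], r.2.1.imp fun _ hs => ⟨hs, List.nil_prefix⟩⟩,
      fun u u' hu ⟨s, hs, hu's⟩ => ⟨s, hs, hu.trans hu's⟩, ?_⟩
    rintro u ⟨s, hs, hus⟩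
    obtain ⟨s', hs', hss', h0, h1⟩ := r.2.2.2 s hs
    exact ⟨p.splitNode s', ⟨s', hs', List.prefix_rfl⟩, hus.trans (splitNode_prefix_splitNode hss'),
      ⟨_, h0, concat_prefix_splitNode_concat s' false⟩,
      ⟨_, h1, concat_prefix_splitNode_concat s' true⟩⟩⟩

theorem copyInto_le (p r : Sacks) : p.copyInto r ≤ p :=
  fun _ ⟨s, _, hus⟩ => p.mem_of_prefix hus (splitNode_mem s)

theorem copyInto_le_copyInto_iff {q : Sacks} : p.copyInto q ≤ p.copyInto r ↔ q ≤ r := by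
  refine ⟨fun h s hs => ?_, fun h u ⟨s, hs, hus⟩ => ⟨s, h hs, hus⟩⟩
  obtain ⟨s', hs', hss'⟩ := h ⟨s, hs, List.prefix_rfl⟩
  exact r.mem_of_prefix (splitNode_prefix_splitNode_iff.mp hss') hs'

theorem copyInto_top (p : Sacks) : p.copyInto SacksTop = p := by
  refine Sacks.le_antisymm (copyInto_le p SacksTop) fun u hu => ?_
  obtain ⟨s, hs⟩ := exists_splitNode_eq_firstSplit hu
  exact ⟨s, trivial, hs ▸ (prefix_firstSplit hu).1⟩

theorem sacksTree_splitNode_preimage (hr : r ≤ p) : SacksTree {s | p.splitNode s ∈ r.1} := by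
  refine ⟨⟨[], firstSplit_mem_of_le hr r.nil_mem⟩,
    fun s t hst ht => r.mem_of_prefix (splitNode_prefix_splitNode hst) ht, fun s hs => ?_⟩
  obtain ⟨w, hsw, hw⟩ := exists_prefix_splits hs
  obtain ⟨s', hs'⟩ := exists_splitNode_eq_firstSplit (hw.of_le hr).mem
  rw [firstSplit_eq_self (hw.of_le hr)] at hs'
  have hchild (b : Bool) : p.splitNode (s' ++ [b]) ∈ r.1 := by
    rw [splitNode_concat, hs']
    exact firstSplit_mem_of_le hr (hw b)
  exact ⟨s', show p.splitNode s' ∈ r.1 from hs' ▸ hw.mem,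
    splitNode_prefix_splitNode_iff.mp (hs' ▸ hsw), hchild false, hchild true⟩

theorem range_copyInto (p : Sacks) : Set.range p.copyInto = Set.Iic p := by
  refine Set.Subset.antisymm (Set.range_subset_iff.mpr (copyInto_le p)) fun r hr => ?_
  refine ⟨⟨_, sacksTree_splitNode_preimage hr⟩, Sacks.le_antisymm ?_ fun u hu => ?_⟩
  · exact fun u ⟨s, hs, hus⟩ => r.mem_of_prefix hus hs
  · obtain ⟨s, hs⟩ := exists_splitNode_eq_firstSplit (hr hu)
    exact ⟨s, show p.splitNode s ∈ r.1 from hs ▸ firstSplit_mem_of_le hr hu,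
      hs ▸ (prefix_firstSplit (hr hu)).1⟩

noncomputable def copyIntoEmbedding (p : Sacks) : Sacks ↪o Sacks where
  toFun := p.copyInto
  inj' _ _ h := Sacks.le_antisymm (copyInto_le_copyInto_iff.mp h.le)
    (copyInto_le_copyInto_iff.mp h.ge)
  map_rel_iff' := copyInto_le_copyInto_iff

theorem coe_copyIntoEmbedding (p : Sacks) : ⇑p.copyIntoEmbedding = p.copyInto := rfl

theorem forcesSet_checkSName_iff_top (p : Sacks) (φ : SOFormula) (x : ℕ → ZFSet.{0}) :
    ForcesSet p φ (fun n => checkSName Sacks (x n)) ↔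
      ForcesSet SacksTop φ (fun n => checkSName Sacks (x n)) := by
  have hlower : IsLowerSet (Set.range p.copyIntoEmbedding) := by
    rw [coe_copyIntoEmbedding, range_copyInto]
    exact isLowerSet_Iic p
  have h := forcesSet_checkSName_iff hlower φ x SacksTop
  rwa [coe_copyIntoEmbedding, copyInto_top] at h

end Sacks

/-- Let `a` be an element of the ground model `V` and `φ(x)` a formula
in the language of set theory. Then there is a condition `p ∈ 𝕊` forcing `φ(ǎ)` if and
only if every condition of `𝕊` forces `φ(ǎ)`. -/
theorem sacks_decides_ground_model_statements (a : ZFSet.{0}) (φ : SOFormula)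
    (hφ : NoSOQuant φ) :
    (∃ p : Sacks, ForcesSet p φ (fun _ => checkSName Sacks a)) ↔
      ∀ p : Sacks, ForcesSet p φ (fun _ => checkSName Sacks a) := by
  have hforces (p : Sacks) := Sacks.forcesSet_checkSName_iff_top p φ (fun _ => a)
  exact ⟨fun ⟨p, hp⟩ q => (hforces q).mpr ((hforces p).mp hp), fun h => ⟨SacksTop, h SacksTop⟩⟩
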